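/- arXiv:2201.00176 — 4 statements merged into one kernel-verified Lean document; each statement's English description precedes it below -/
import Mathlib

section
/- Let m,n ≥ 3, let Λ be the m×n torus lattice, and let J^x = (J^x_p ≥ 0 : p ∈ F), J^z = (J^z_s ≥ 0 : s ∈ V) be nonnegative couplings. Let Q be any matrix indexed by Ω that is diagonal in the σ⁽³⁾ product basis, say with diagonal entries Q|σ⟩ = q(σ)|σ⟩ for σ ∈ Ω. Then the toric code equilibrium expectation equals the four-body Ising expectation: ⟨Q⟩ = E_{J^z}[q(σ)]. In particular, ⟨Q⟩ does not depend on J^x. -/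
open scoped BigOperators

namespace Toric

/-- Vertices of the `m × n` torus lattice. Faces are also indexed by `Vtx`
(the face `p` is the unit square whose lower-left corner is `p`). -/
abbrev Vtx (m n : ℕ) := ZMod m × ZMod n

/-- Edges of the torus: `(s, true)` is the horizontal edge from `s` to its right
neighbour, `(s, false)` the vertical edge from `s` to its upper neighbour. -/
abbrev Edge (m n : ℕ) := Vtx m n × Bool

variable (m n : ℕ)

/-- The four edges incident to the vertex `s`, in a fixed order:
right, up, left, down. -/
def star (s : Vtx m n) : Fin 4 → Edge m n :=
  ![(s, true), (s, false), ((s.1 - 1, s.2), true), ((s.1, s.2 - 1), false)]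

/-- The four edges bounding the face `p`, in a fixed order:
bottom, left, top, right. -/
def faceEdge (p : Vtx m n) : Fin 4 → Edge m n :=
  ![(p, true), (p, false), ((p.1, p.2 + 1), true), ((p.1 + 1, p.2), false)]

/-- The set of the four edges incident to the vertex `s` (written `e ∼ s`). -/
def starSet (s : Vtx m n) : Finset (Edge m n) := Finset.univ.image (star m n s)

/-- The set of the four edges bounding the face `p` (written `e ∼ p`). -/
def faceSet (p : Vtx m n) : Finset (Edge m n) := Finset.univ.image (faceEdge m n p)

/-- Arrow configurations: each edge points right/up (`true`) or left/down (`false`). -/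
abbrev AConf (m n : ℕ) := Edge m n → Bool

/-- Which of the four edges at `s` are incoming (point towards `s`). -/
def incVec (d : AConf m n) (s : Vtx m n) : Fin 4 → Bool :=
  ![!d (star m n s 0), !d (star m n s 1), d (star m n s 2), d (star m n s 3)]

/-- Eight-vertex condition: every vertex has an even number of incoming arrows. -/
def IsEightVertex (d : AConf m n) : Prop :=
  ∀ s : Vtx m n, Even (Finset.univ.filter (fun i => incVec m n d s i = true)).card

/-- A local vertex type `η : Fin 4 → Bool` (arrow directions of the four incident
edges, in the order right, up, left, down) is one of the eight allowed vertex types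
I–VIII iff the number of incoming arrows is even. -/
def IsVertexType (η : Fin 4 → Bool) : Prop :=
  Even (Finset.univ.filter
    (fun i => (![!η 0, !η 1, η 2, η 3] : Fin 4 → Bool) i = true)).card

/-- The event `A^η_C` that every vertex of `C` exhibits the type `η` or its
total reversal. -/
def EventA (η : Fin 4 → Bool) (C : Finset (Vtx m n)) (d : AConf m n) : Prop :=
  ∀ s ∈ C, (∀ i, d (star m n s i) = η i) ∨ (∀ i, d (star m n s i) = !η i)

/-- The event `A^{η,ν}_C` that every vertex of `C` exhibits the type `η` or `ν`
or one of their total reversals. -/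
def EventA2 (η ν : Fin 4 → Bool) (C : Finset (Vtx m n)) (d : AConf m n) : Prop :=
  ∀ s ∈ C, (∀ i, d (star m n s i) = η i) ∨ (∀ i, d (star m n s i) = !η i) ∨
    (∀ i, d (star m n s i) = ν i) ∨ (∀ i, d (star m n s i) = !ν i)

/-- A non-contractible cycle of vertices of `C`: a cyclic sequence of vertices of `C`
whose consecutive vertices are nearest neighbours on the torus (with the actual
`ℤ²`-valued unit steps recorded), and whose winding number (the total displacement
in `ℤ²`) is nonzero. -/
structure NCCycle (C : Set (Vtx m n)) where
  len : ℕ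
  len_pos : 0 < len
  v : ℕ → Vtx m n
  step : ℕ → ℤ × ℤ
  mem : ∀ i < len, v i ∈ C
  unit : ∀ i < len,
    step i = (1, 0) ∨ step i = (-1, 0) ∨ step i = (0, 1) ∨ step i = (0, -1)
  succ : ∀ i < len,
    v (i + 1) = ((v i).1 + ((step i).1 : ZMod m), (v i).2 + ((step i).2 : ZMod n))
  closed : v len = v 0
  winding : ∑ i ∈ Finset.range len, step i ≠ 0

/-- Hypothesis (★): either `C` contains no non-contractible cycle, or every
non-contractible cycle in `C` has even length. -/
def StarHyp (C : Set (Vtx m n)) : Prop :=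
  IsEmpty (NCCycle m n C) ∨ ∀ γ : NCCycle m n C, Even γ.len

section torusProb
variable [NeZero m] [NeZero n]

/-- The set `Δ_8vx` of eight-vertex configurations on the torus. -/
noncomputable def Δ8 : Finset (AConf m n) :=
  haveI := Classical.decPred (IsEightVertex m n)
  Finset.univ.filter (IsEightVertex m n)

/-- The uniform eight-vertex probability measure `μ`. -/
noncomputable def prob (P : AConf m n → Prop) : ℝ :=
  haveI := Classical.decPred P
  (((Δ8 m n).filter P).card : ℝ) / ((Δ8 m n).card : ℝ)

end torusProb

/-- Spin configurations `Ω = {-1,+1}^E`. -/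
abbrev SConf (m n : ℕ) := Edge m n → ℤˣ

section matrices
variable [NeZero m] [NeZero n]

/-- Real matrices indexed by the spin configurations (i.e. operators expressed in
the `σ³` product basis). -/
abbrev Mat (m n : ℕ) [NeZero m] [NeZero n] := Matrix (SConf m n) (SConf m n) ℝ

/-- The spin configuration `x^p`, equal to `-1` exactly on the edges of the face `p`. -/
def xconf (p : Vtx m n) : SConf m n := fun e => if e ∈ faceSet m n p then -1 else 1

/-- The spin configuration equal to `-1` exactly on the edges of a set `A`. -/
def aconf (A : Finset (Edge m n)) : SConf m n := fun e => if e ∈ A then -1 else 1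

/-- The plaquette operator `X_p = ∏_{e ∼ p} σ¹_e`: the permutation matrix flipping
the spins on the four edges of `p`. -/
def X (p : Vtx m n) : Mat m n := fun τ ω => if τ = xconf m n p * ω then 1 else 0

/-- `X_A = ∏_{e ∈ A} σ¹_e`: the permutation matrix flipping the spins on `A`. -/
def XA (A : Finset (Edge m n)) : Mat m n := fun τ ω => if τ = aconf m n A * ω then 1 else 0

/-- The product `∏_{p ∈ C} X_p` of plaquette operators: the permutation matrix
flipping the spins around all faces of `C`. -/
def XProd (C : Finset (Vtx m n)) : Mat m n :=
  fun τ ω => if τ = (∏ p ∈ C, xconf m n p) * ω then 1 else 0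

/-- The star operator `Z_s = ∏_{e ∼ s} σ³_e` (a diagonal matrix). -/
def Z (s : Vtx m n) : Mat m n :=
  Matrix.diagonal fun ω => (((∏ e ∈ starSet m n s, ω e : ℤˣ) : ℤ) : ℝ)

/-- `Z_A = ∏_{e ∈ A} σ³_e` (a diagonal matrix). -/
def ZA (A : Finset (Edge m n)) : Mat m n :=
  Matrix.diagonal fun ω => (((∏ e ∈ A, ω e : ℤˣ) : ℤ) : ℝ)

/-- The product `∏_{s ∈ D} Z_s` of star operators (a diagonal matrix). -/
def ZProd (D : Finset (Vtx m n)) : Mat m n :=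
  Matrix.diagonal fun ω => (((∏ s ∈ D, ∏ e ∈ starSet m n s, ω e : ℤˣ) : ℤ) : ℝ)

/-- The toric code Hamiltonian `H = -∑_p Jˣ_p X_p - ∑_s Jᶻ_s Z_s`. -/
noncomputable def H (Jx Jz : Vtx m n → ℝ) : Mat m n :=
  -∑ p : Vtx m n, Jx p • X m n p - ∑ s : Vtx m n, Jz s • Z m n s

/-- Matrix exponential. -/
noncomputable def mexp (A : Mat m n) : Mat m n := NormedSpace.exp A

/-- The equilibrium state `⟨A⟩ = tr(A e^{-H}) / tr(e^{-H})`. -/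
noncomputable def gibbs (Jx Jz : Vtx m n → ℝ) (A : Mat m n) : ℝ :=
  (A * mexp m n (-H m n Jx Jz)).trace / (mexp m n (-H m n Jx Jz)).trace

end matrices

/-- The scalar `I^ε_s(σ) = (1/16) ∏_{i=1}^4 (1 + ε_i σ_i(s))`. -/
noncomputable def Ifun (ε : Fin 4 → ℤˣ) (s : Vtx m n) (σ : SConf m n) : ℝ :=
  (1 / 16 : ℝ) * ∏ i : Fin 4, (1 + ((ε i : ℤ) : ℝ) * ((σ (star m n s i) : ℤ) : ℝ))

/-- The scalar `Ī^ε_s(σ) = (1/16) ∏_{i=1}^4 (1 - ε_i σ_i(s))`. -/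
noncomputable def Ibar (ε : Fin 4 → ℤˣ) (s : Vtx m n) (σ : SConf m n) : ℝ :=
  (1 / 16 : ℝ) * ∏ i : Fin 4, (1 - ((ε i : ℤ) : ℝ) * ((σ (star m n s i) : ℤ) : ℝ))

/-- `I^ε_C(σ) = ∏_{s ∈ C} (I^ε_s(σ) + Ī^ε_s(σ))`: the indicator that around every
vertex of `C` the spins all agree with `ε` or are all opposite. -/
noncomputable def IC (ε : Fin 4 → ℤˣ) (C : Finset (Vtx m n)) (σ : SConf m n) : ℝ :=
  ∏ s ∈ C, (Ifun m n ε s σ + Ibar m n ε s σ)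

/-- `I^{ε,δ}_C(σ) = ∏_{s ∈ C} (I^ε_s(σ) + Ī^ε_s(σ) + I^δ_s(σ) + Ī^δ_s(σ))`. -/
noncomputable def IC2 (ε δ : Fin 4 → ℤˣ) (C : Finset (Vtx m n)) (σ : SConf m n) : ℝ :=
  ∏ s ∈ C, (Ifun m n ε s σ + Ibar m n ε s σ + Ifun m n δ s σ + Ibar m n δ s σ)

section matrices2
variable [NeZero m] [NeZero n]

/-- The (diagonal) operator `Q^ε_C = ∏_{s ∈ C} (P^ε_s + P̄^ε_s)`, where
`P^ε_s = (1/16) ∏_i (1 + ε_i σ³_i(s))` and `P̄^ε_s = (1/16) ∏_i (1 - ε_i σ³_i(s))`. -/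
noncomputable def Q (ε : Fin 4 → ℤˣ) (C : Finset (Vtx m n)) : Mat m n :=
  Matrix.diagonal (IC m n ε C)

/-- The (diagonal) operator `Q^{ε,δ}_C = ∏_{s ∈ C} (P^ε_s + P̄^ε_s + P^δ_s + P̄^δ_s)`. -/
noncomputable def Q2 (ε δ : Fin 4 → ℤˣ) (C : Finset (Vtx m n)) : Mat m n :=
  Matrix.diagonal (IC2 m n ε δ C)

/-- Expectation `E_J[f]` under the four-body Ising measure
`P_J(σ) ∝ exp(∑_s J_s ∏_{e ∼ s} σ_e)`. -/
noncomputable def isingE (J : Vtx m n → ℝ) (f : SConf m n → ℝ) : ℝ :=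
  (∑ σ : SConf m n, f σ *
      Real.exp (∑ s : Vtx m n, J s * (((∏ e ∈ starSet m n s, σ e : ℤˣ) : ℤ) : ℝ))) /
    (∑ σ : SConf m n,
      Real.exp (∑ s : Vtx m n, J s * (((∏ e ∈ starSet m n s, σ e : ℤˣ) : ℤ) : ℝ)))

end matrices2

end Toric

/-!
Write `-H = A + D` with `A = ∑ₚ Jˣₚ Xₚ` and `D = ∑ₛ Jᶻₛ Zₛ`, the diagonal matrix of the
four-body Ising energy. A star and a plaquette share zero or two edges, so every `Xₚ`
preserves the Ising energy and `A` commutes with `D`; hence `e^{-H} = e^A e^D`. Each `Xₚ` is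
a translation of the abelian group `Ω`, so `A`, and with it `e^A`, commutes with all
translations of `Ω`: the diagonal of `e^A` is a constant `c`, positive because
`e^A = (e^{A/2})ᵀ e^{A/2}` with `e^{A/2}` invertible. Therefore
`tr(Q e^{-H}) = c ∑_σ q(σ) e^{D(σ)}`, and `c` cancels in `⟨Q⟩`.
-/

open Matrix

section TranslationMatrix

variable {G R : Type*} [CommGroup G] [DecidableEq G]

def translationMatrix [Zero R] [One R] (g : G) : Matrix G G R :=
  fun τ ω => if τ = g * ω then 1 else 0

lemma translationMatrix_transpose [Zero R] [One R] (g : G) :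
    (translationMatrix g : Matrix G G R)ᵀ = translationMatrix g⁻¹ := by
  ext τ ω
  simp only [transpose_apply, translationMatrix, eq_inv_mul_iff_mul_eq, eq_comm]

variable [Fintype G] [Semiring R]

lemma translationMatrix_mul_apply (g : G) (M : Matrix G G R) (τ ω : G) :
    (translationMatrix g * M : Matrix G G R) τ ω = M (g⁻¹ * τ) ω := by
  simp [mul_apply, translationMatrix, eq_comm (a := τ), ← eq_inv_mul_iff_mul_eq]

lemma mul_translationMatrix_apply (g : G) (M : Matrix G G R) (τ ω : G) :
    (M * translationMatrix g : Matrix G G R) τ ω = M τ (g * ω) := by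
  simp [mul_apply, translationMatrix]

lemma commute_translationMatrix_iff (g : G) (M : Matrix G G R) :
    Commute (translationMatrix g) M ↔ ∀ σ τ, M (g * σ) (g * τ) = M σ τ := by
  simp only [Commute, SemiconjBy, ← Matrix.ext_iff, translationMatrix_mul_apply,
    mul_translationMatrix_apply]
  constructor
  · intro h σ τ
    simpa using (h (g * σ) τ).symm
  · intro h τ ω
    simpa using (h (g⁻¹ * τ) ω).symm

lemma commute_translationMatrix_translationMatrix (g h : G) :
    Commute (translationMatrix g : Matrix G G R) (translationMatrix h) := by
  refine (commute_translationMatrix_iff g _).2 fun σ τ => ?_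
  simp only [translationMatrix, mul_left_comm h g, mul_right_inj]

lemma commute_translationMatrix_diagonal {g : G} {d : G → R} (hd : ∀ σ, d (g * σ) = d σ) :
    Commute (translationMatrix g) (diagonal d) := by
  refine (commute_translationMatrix_iff g _).2 fun σ τ => ?_
  simp only [diagonal_apply, mul_right_inj, hd]

end TranslationMatrix

section HermitianExp

variable {ι : Type*} [Fintype ι] [DecidableEq ι]

lemma posDef_exp_of_isHermitian {A : Matrix ι ι ℝ} (hA : A.IsHermitian) :
    (NormedSpace.exp A).PosDef := by
  set B := NormedSpace.exp ((1 / 2 : ℝ) • A)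
  have hB : Bᴴ = B := (hA.smul (IsSelfAdjoint.all _)).exp
  have hsq : NormedSpace.exp A = Bᴴ * B := by
    rw [hB, ← Matrix.exp_add_of_commute _ _ (Commute.refl _), ← add_smul]
    norm_num
  rw [hsq]
  exact .conjTranspose_mul_self B (mulVec_injective_iff_isUnit.2 (Matrix.isUnit_exp _))

end HermitianExp

section ConstantDiagonal

variable {ι R : Type*} [Fintype ι] [DecidableEq ι] [CommSemiring R] {M : Matrix ι ι R} {c : R}

lemma trace_mul_diagonal_of_diag_eq (hM : ∀ i, M i i = c) (w : ι → R) :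
    (M * diagonal w).trace = c * ∑ i, w i := by
  simp [trace, mul_diagonal, hM, Finset.mul_sum]

lemma trace_diagonal_mul_mul_diagonal_of_diag_eq (hM : ∀ i, M i i = c) (q w : ι → R) :
    (diagonal q * (M * diagonal w)).trace = c * ∑ i, q i * w i := by
  simp only [trace, diag_apply, diagonal_mul, mul_diagonal, hM, Finset.mul_sum]
  exact Finset.sum_congr rfl fun i _ => by ring

end ConstantDiagonal

namespace Toric

variable {m n : ℕ}

lemma horizontal_mem_faceSet_iff {p v : Vtx m n} :
    (v, true) ∈ faceSet m n p ↔ v.1 = p.1 ∧ (v.2 = p.2 ∨ v.2 = p.2 + 1) := by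
  simp [faceSet, faceEdge, Fin.exists_fin_succ, Prod.ext_iff]
  tauto

lemma vertical_mem_faceSet_iff {p v : Vtx m n} :
    (v, false) ∈ faceSet m n p ↔ v.2 = p.2 ∧ (v.1 = p.1 ∨ v.1 = p.1 + 1) := by
  simp [faceSet, faceEdge, Fin.exists_fin_succ, Prod.ext_iff]
  tauto

section Nontrivial

variable [Nontrivial (ZMod m)] [Nontrivial (ZMod n)]

lemma star_injective (s : Vtx m n) : Function.Injective (star m n s) := by
  intro i j
  fin_cases i <;> fin_cases j <;> simp [star, Prod.ext_iff, eq_sub_iff_add_eq]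

lemma prod_starSet_xconf (p s : Vtx m n) : ∏ e ∈ starSet m n s, xconf m n p e = 1 := by
  have hp₁ : p.1 ≠ p.1 + 1 := by simp
  have hp₂ : p.2 ≠ p.2 + 1 := by simp
  -- Both the horizontal and the vertical pair of star edges meet `p` in exactly one edge iff
  -- `s` is a corner of `p`, and otherwise in none.
  set a : ℤˣ := if (s.1 = p.1 ∨ s.1 = p.1 + 1) ∧ (s.2 = p.2 ∨ s.2 = p.2 + 1) then -1 else 1
  have horizontal : xconf m n p (s, true) * xconf m n p ((s.1 - 1, s.2), true) = a := by
    simp only [a, xconf, horizontal_mem_faceSet_iff, sub_eq_iff_eq_add]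
    split_ifs <;> simp_all
  have vertical : xconf m n p (s, false) * xconf m n p ((s.1, s.2 - 1), false) = a := by
    simp only [a, xconf, vertical_mem_faceSet_iff, sub_eq_iff_eq_add]
    split_ifs <;> simp_all
  rw [starSet, Finset.prod_image (star_injective s).injOn, Fin.prod_univ_four]
  calc _ = (xconf m n p (s, true) * xconf m n p ((s.1 - 1, s.2), true)) *
        (xconf m n p (s, false) * xconf m n p ((s.1, s.2 - 1), false)) := by
        rw [mul_assoc, mul_mul_mul_comm]; rfl
    _ = 1 := by rw [horizontal, vertical, Int.units_mul_self]

end Nontrivial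

section Hamiltonian

variable [NeZero m] [NeZero n]

def isingEnergy (J : Vtx m n → ℝ) (σ : SConf m n) : ℝ :=
  ∑ s : Vtx m n, J s * (((∏ e ∈ starSet m n s, σ e : ℤˣ) : ℤ) : ℝ)

lemma X_eq_translationMatrix (p : Vtx m n) : X m n p = translationMatrix (xconf m n p) := rfl

def plaquetteSum (Jx : Vtx m n → ℝ) : Mat m n :=
  ∑ p : Vtx m n, Jx p • X m n p

lemma sum_smul_Z_eq_diagonal (Jz : Vtx m n → ℝ) :
    ∑ s : Vtx m n, Jz s • Z m n s = diagonal (isingEnergy Jz) := by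
  ext σ τ
  by_cases h : σ = τ <;> simp [Z, isingEnergy, Matrix.sum_apply, h]

lemma neg_H_eq (Jx Jz : Vtx m n → ℝ) :
    -H m n Jx Jz = plaquetteSum Jx + diagonal (isingEnergy Jz) := by
  rw [H, plaquetteSum, sum_smul_Z_eq_diagonal]
  abel

lemma isHermitian_plaquetteSum (Jx : Vtx m n → ℝ) : (plaquetteSum Jx).IsHermitian := by
  have hX : ∀ p, (X m n p)ᵀ = X m n p := fun p => by
    rw [X_eq_translationMatrix, translationMatrix_transpose, inv_eq_of_mul_eq_one_left]
    exact funext fun e => Int.units_mul_self _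
  rw [IsHermitian, conjTranspose_eq_transpose_of_trivial, plaquetteSum, transpose_sum]
  simp only [transpose_smul, hX]

lemma commute_translationMatrix_plaquetteSum (Jx : Vtx m n → ℝ) (g : SConf m n) :
    Commute (translationMatrix g) (plaquetteSum Jx) :=
  Commute.sum_right _ _ _ fun p _ =>
    (commute_translationMatrix_translationMatrix g (xconf m n p)).smul_right (Jx p)

lemma exp_plaquetteSum_apply_self (Jx : Vtx m n → ℝ) (σ : SConf m n) :
    NormedSpace.exp (plaquetteSum Jx) σ σ = NormedSpace.exp (plaquetteSum Jx) 1 1 := by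
  simpa using (commute_translationMatrix_iff σ _).1
    (commute_translationMatrix_plaquetteSum Jx σ).exp_right 1 1

variable [Nontrivial (ZMod m)] [Nontrivial (ZMod n)]

lemma isingEnergy_xconf_mul (Jz : Vtx m n → ℝ) (p : Vtx m n) (σ : SConf m n) :
    isingEnergy Jz (xconf m n p * σ) = isingEnergy Jz σ := by
  simp only [isingEnergy, Pi.mul_apply, Finset.prod_mul_distrib, prod_starSet_xconf, one_mul]

lemma commute_plaquetteSum_diagonal_isingEnergy (Jx Jz : Vtx m n → ℝ) :
    Commute (plaquetteSum Jx) (diagonal (isingEnergy Jz)) :=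
  Commute.sum_left _ _ _ fun p _ =>
    (commute_translationMatrix_diagonal (isingEnergy_xconf_mul Jz p)).smul_left (Jx p)

lemma mexp_neg_H_eq (Jx Jz : Vtx m n → ℝ) :
    mexp m n (-H m n Jx Jz) =
      NormedSpace.exp (plaquetteSum Jx) * diagonal fun σ => Real.exp (isingEnergy Jz σ) := by
  rw [mexp, neg_H_eq,
    Matrix.exp_add_of_commute _ _ (commute_plaquetteSum_diagonal_isingEnergy Jx Jz),
    Matrix.exp_diagonal]
  congr
  funext σ
  rw [Pi.coe_exp, Real.exp_eq_exp_ℝ]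

end Hamiltonian

end Toric

theorem toric_code_diagonal_is_ising_general (m n : ℕ) [NeZero m] [NeZero n]
    (hm : 3 ≤ m) (hn : 3 ≤ n)
    (Jx Jz : Toric.Vtx m n → ℝ)
    (q : Toric.SConf m n → ℝ) :
    Toric.gibbs m n Jx Jz (Matrix.diagonal q) = Toric.isingE m n Jz q := by
  have : Fact (1 < m) := ⟨by omega⟩
  have : Fact (1 < n) := ⟨by omega⟩
  have hc : 0 < NormedSpace.exp (Toric.plaquetteSum Jx) 1 1 :=
    (posDef_exp_of_isHermitian (Toric.isHermitian_plaquetteSum Jx)).diag_pos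
  rw [Toric.gibbs, Toric.mexp_neg_H_eq,
    trace_diagonal_mul_mul_diagonal_of_diag_eq (Toric.exp_plaquetteSum_apply_self Jx),
    trace_mul_diagonal_of_diag_eq (Toric.exp_plaquetteSum_apply_self Jx),
    mul_div_mul_left _ _ hc.ne']
  rfl

/-- For any observable `Q` diagonal in the `σ³` product basis with
diagonal entries `q`, the toric code equilibrium expectation equals the four-body
Ising expectation: `⟨Q⟩ = E_{Jᶻ}[q]`; in particular it does not depend on `Jˣ`. -/
theorem toric_code_diagonal_is_ising (m n : ℕ) [NeZero m] [NeZero n]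
    (hm : 3 ≤ m) (hn : 3 ≤ n)
    (Jx Jz : Toric.Vtx m n → ℝ) (hJx : ∀ p, 0 ≤ Jx p) (hJz : ∀ s, 0 ≤ Jz s)
    (q : Toric.SConf m n → ℝ) :
    Toric.gibbs m n Jx Jz (Matrix.diagonal q) = Toric.isingE m n Jz q :=
  toric_code_diagonal_is_ising_general m n hm hn Jx Jz q
end

section
/- Let m,n ≥ 3, let Λ be the m×n torus lattice, let J^x = (J^x_p : p ∈ F) be real couplings and t > 0. Then all diagonal entries of the matrix exp(t Σ_{p∈F} J^x_p X_p) are equal, and for every σ ∈ Ω one has ⟨σ| exp(t Σ_{p∈F} J^x_p X_p) |σ⟩ = ∏_{p∈F} cosh(t J^x_p) + ∏_{p∈F} sinh(t J^x_p). -/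
open scoped BigOperators

/-!
The plaquette operators `X_p` are the permutation matrices of the spin flips `x^p` in the
abelian group `Ω` of exponent two, so they commute and square to `1`, and
`exp (t ∑ Jˣ_p X_p) = ∏_p (cosh (t Jˣ_p) + sinh (t Jˣ_p) X_p)`. Expanding this product in
the group algebra `ℝ[Ω]`, a diagonal entry is the coefficient of the identity, i.e. the sum
over the sets `S` of faces with `∏_{p ∈ S} x^p = 1`. An edge is flipped by `∏_{p ∈ S} x^p`
iff exactly one of its two faces lies in `S`, so on the torus only `S = ∅` and `S = F`
contribute.
-/

open Finset MonoidAlgebra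

theorem exp_smul_of_mul_self_eq_one {A : Type*} [Ring A] [Algebra ℝ A] [TopologicalSpace A]
    [IsTopologicalRing A] [T2Space A] [ContinuousSMul ℝ A] {M : A} (h : M * M = 1) (r : ℝ) :
    NormedSpace.exp (r • M) = Real.cosh r • 1 + Real.sinh r • M := by
  have hpow (k : ℕ) : M ^ (2 * k) = 1 := by rw [pow_mul M, sq, h, one_pow]
  have heven : HasSum (fun k : ℕ => ((2 * k).factorial : ℝ)⁻¹ • (r • M) ^ (2 * k))
      (Real.cosh r • (1 : A)) := by
    convert (Real.hasSum_cosh r).smul_const (1 : A) using 2 with k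
    rw [smul_pow, hpow, smul_smul, div_eq_mul_inv, mul_comm]
  have hodd : HasSum (fun k : ℕ => ((2 * k + 1).factorial : ℝ)⁻¹ • (r • M) ^ (2 * k + 1))
      (Real.sinh r • M) := by
    convert (Real.hasSum_sinh r).smul_const M using 2 with k
    rw [smul_pow, pow_succ M, hpow, one_mul, smul_smul, div_eq_mul_inv, mul_comm]
  rw [NormedSpace.exp_eq_tsum ℝ]
  exact (HasSum.even_add_odd (f := fun k => (k.factorial : ℝ)⁻¹ • (r • M) ^ k)
    heven hodd).tsum_eq

theorem MonoidAlgebra.coeff_prod_single_add_single_one {ι R G : Type*} [CommSemiring R]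
    [CommMonoid G] [DecidableEq ι] [DecidableEq G] (s : Finset ι) (g : ι → G) (a b : ι → R)
    (x : G) :
    (∏ i ∈ s, (single (g i) (a i) + single 1 (b i))).coeff x =
      ∑ t ∈ s.powerset with ∏ i ∈ t, g i = x,
        (∏ i ∈ t, a i) * ∏ i ∈ s \ t, b i := by
  simp only [prod_add, prod_single, single_mul_single, prod_const_one, mul_one, coeff_sum,
    coeff_single, Finset.sum_apply', Finsupp.single_apply, sum_filter]

section LeftRegular

variable {R G : Type*} [CommSemiring R] [Group G] [Fintype G] [DecidableEq G]

variable (R G) in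
noncomputable def leftRegMatrix : G →* Matrix G G R :=
  Matrix.permMatrixHom.comp (MulAction.toPermHom G G)

theorem leftRegMatrix_apply (g τ ω : G) :
    leftRegMatrix R G g τ ω = if τ = g * ω then 1 else 0 := by
  simp [leftRegMatrix, eq_inv_mul_iff_mul_eq, eq_comm]

theorem lift_leftRegMatrix_apply (f : MonoidAlgebra R G) (τ ω : G) :
    lift R (Matrix G G R) G (leftRegMatrix R G) f τ ω = f.coeff (τ * ω⁻¹) := by
  induction f using MonoidAlgebra.induction_linear with
  | zero => simp
  | add x y hx hy => simp [hx, hy]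
  | single g r =>
    simp [lift_single, leftRegMatrix_apply, Finsupp.single_apply, eq_mul_inv_iff_mul_eq, eq_comm]

end LeftRegular

section CommutingInvolutions

variable {ι G : Type*} [CommGroup G] [Fintype G] [DecidableEq G]

theorem exp_sum_smul_leftRegMatrix (s : Finset ι) (c : ι → ℝ) (g : ι → G)
    (hg : ∀ i, g i * g i = 1) :
    NormedSpace.exp (∑ i ∈ s, c i • leftRegMatrix ℝ G (g i)) =
      lift ℝ (Matrix G G ℝ) G (leftRegMatrix ℝ G)
        (∏ i ∈ s, (single (g i) (Real.sinh (c i)) + single 1 (Real.cosh (c i)))) := by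
  classical
  induction s using Finset.induction_on with
  | empty => simp
  | insert a s ha ih =>
    have hcomm : Commute (c a • leftRegMatrix ℝ G (g a))
        (∑ i ∈ s, c i • leftRegMatrix ℝ G (g i)) :=
      .sum_right _ _ _ fun i _ =>
        (((Commute.all _ _).map (leftRegMatrix ℝ G)).smul_left _).smul_right _
    rw [sum_insert ha, prod_insert ha, Matrix.exp_add_of_commute _ _ hcomm, ih,
      exp_smul_of_mul_self_eq_one (by rw [← map_mul, hg, map_one]), map_mul, map_add, lift_single,
      lift_single, map_one, add_comm]

theorem exp_sum_smul_leftRegMatrix_apply_self [DecidableEq ι] (s : Finset ι) (c : ι → ℝ)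
    (g : ι → G) (hg : ∀ i, g i * g i = 1) (σ : G) :
    NormedSpace.exp (∑ i ∈ s, c i • leftRegMatrix ℝ G (g i)) σ σ =
      ∑ t ∈ s.powerset with ∏ i ∈ t, g i = 1,
        (∏ i ∈ t, Real.sinh (c i)) * ∏ i ∈ s \ t, Real.cosh (c i) := by
  rw [exp_sum_smul_leftRegMatrix s c g hg, lift_leftRegMatrix_apply, mul_inv_cancel,
    coeff_prod_single_add_single_one]

end CommutingInvolutions

namespace Toric

open scoped Pointwise

variable {m n : ℕ}

def normalStep : Bool → Vtx m n
  | true => (0, 1)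
  | false => (1, 0)

theorem mem_faceSet_iff {p : Vtx m n} {e : Edge m n} :
    e ∈ faceSet m n p ↔ p = e.1 ∨ p = e.1 - normalStep e.2 := by
  rcases e with ⟨v, _ | _⟩ <;>
    simp only [faceSet, faceEdge, mem_image, mem_univ, true_and, Fin.exists_fin_succ,
      Fin.exists_fin_zero, normalStep] <;>
    simp [eq_sub_iff_add_eq, Prod.ext_iff]

theorem eq_top_of_normalStep_mem [NeZero m] [NeZero n] {H : AddSubgroup (Vtx m n)}
    (hH : ∀ b, normalStep b ∈ H) : H = ⊤ := by
  refine eq_top_iff.2 fun v _ => ?_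
  have hv : v = v.1.val • normalStep false + v.2.val • normalStep true := by
    simp [normalStep]
  rw [hv]
  exact add_mem (nsmul_mem (hH _) _) (nsmul_mem (hH _) _)

theorem X_eq_leftRegMatrix [NeZero m] [NeZero n] (p : Vtx m n) :
    X m n p = leftRegMatrix ℝ (SConf m n) (xconf m n p) := by
  ext τ ω
  simp [X, leftRegMatrix_apply]

variable [Nontrivial (ZMod m)] [Nontrivial (ZMod n)]

theorem normalStep_ne_zero (b : Bool) :
    normalStep b ≠ (0 : Vtx m n) := by
  cases b <;> simp [normalStep]

theorem xconf_apply (p : Vtx m n) (e : Edge m n) :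
    xconf m n p e =
      (if p = e.1 then -1 else 1) * (if p = e.1 - normalStep e.2 then -1 else 1) := by
  have hne : e.1 ≠ e.1 - normalStep e.2 := fun h => normalStep_ne_zero e.2 (sub_eq_self.1 h.symm)
  simp only [xconf, mem_faceSet_iff]
  split_ifs <;> simp_all

theorem prod_xconf_apply (S : Finset (Vtx m n)) (e : Edge m n) :
    (∏ p ∈ S, xconf m n p) e =
      (if e.1 ∈ S then -1 else 1) * (if e.1 - normalStep e.2 ∈ S then -1 else 1) := by
  simp only [Finset.prod_apply, xconf_apply, prod_mul_distrib, prod_ite_eq']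

variable [NeZero m] [NeZero n]

theorem prod_xconf_eq_one_iff (S : Finset (Vtx m n)) :
    ∏ p ∈ S, xconf m n p = 1 ↔ S = ∅ ∨ S = univ := by
  constructor
  · intro h
    have hshift (v : Vtx m n) (b : Bool) : v ∈ S ↔ v - normalStep b ∈ S := by
      have hv := congrFun h (v, b)
      rw [prod_xconf_apply] at hv
      split_ifs at hv <;> simp_all
    have hstab : AddAction.stabilizer (Vtx m n) S = ⊤ :=
      eq_top_of_normalStep_mem fun b => AddAction.mem_stabilizer_finset.2 fun v => by
        rw [vadd_eq_add, hshift _ b, add_sub_cancel_left]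
    refine S.eq_empty_or_nonempty.imp id fun ⟨a, ha⟩ => eq_univ_iff_forall.2 fun q => ?_
    have hq := AddAction.mem_stabilizer_finset.1 (hstab ▸ AddSubgroup.mem_top (q - a)) a
    rwa [vadd_eq_add, sub_add_cancel, iff_true_right ha] at hq
  · rintro (rfl | rfl)
    · simp
    · funext e
      rw [prod_xconf_apply]
      simp

end Toric

theorem exp_X_diagonal_entries_general (m n : ℕ) [NeZero m] [NeZero n]
    (hm : 3 ≤ m) (hn : 3 ≤ n)
    (Jx : Toric.Vtx m n → ℝ) (t : ℝ) (σ : Toric.SConf m n) :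
    Toric.mexp m n (t • ∑ p : Toric.Vtx m n, Jx p • Toric.X m n p) σ σ =
      (∏ p : Toric.Vtx m n, Real.cosh (t * Jx p)) +
        ∏ p : Toric.Vtx m n, Real.sinh (t * Jx p) := by
  have : Nontrivial (ZMod m) := ZMod.nontrivial_iff.2 (by omega)
  have : Nontrivial (ZMod n) := ZMod.nontrivial_iff.2 (by omega)
  have hsum : t • ∑ p, Jx p • Toric.X m n p =
      ∑ p, (t * Jx p) • leftRegMatrix ℝ (Toric.SConf m n) (Toric.xconf m n p) := by
    simp only [smul_sum, smul_smul, Toric.X_eq_leftRegMatrix]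
  have hker : {S ∈ (univ : Finset (Toric.Vtx m n)).powerset |
      ∏ p ∈ S, Toric.xconf m n p = 1} = {∅, univ} := by
    ext S
    simp [Toric.prod_xconf_eq_one_iff]
  rw [Toric.mexp, hsum, exp_sum_smul_leftRegMatrix_apply_self _ _ _
    (fun p => funext fun _ => Int.units_mul_self _), hker, sum_pair univ_nonempty.ne_empty.symm]
  simp

/-- All diagonal entries of `exp(t ∑_p Jˣ_p X_p)` are equal, namely
equal to `∏_p cosh(t Jˣ_p) + ∏_p sinh(t Jˣ_p)`. -/
theorem exp_X_diagonal_entries (m n : ℕ) [NeZero m] [NeZero n]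
    (hm : 3 ≤ m) (hn : 3 ≤ n)
    (Jx : Toric.Vtx m n → ℝ) (t : ℝ) (ht : 0 < t) (σ : Toric.SConf m n) :
    Toric.mexp m n (t • ∑ p : Toric.Vtx m n, Jx p • Toric.X m n p) σ σ =
      (∏ p : Toric.Vtx m n, Real.cosh (t * Jx p)) +
        ∏ p : Toric.Vtx m n, Real.sinh (t * Jx p) :=
  exp_X_diagonal_entries_general m n hm hn Jx t σ
end

section
/- Let m,n ≥ 3, let Λ be the m×n torus lattice, and let J^x = (J^x_p ≥ 0 : p ∈ F), J^z = (J^z_s ≥ 0 : s ∈ V) be nonnegative couplings. Let A ⊆ E and set X_A = ∏_{e∈A} σ⁽¹⁾_e. If there is no subset C ⊆ F such that A equals the symmetric difference △_{p∈C} {e ∈ E : e ∼ p} (equivalently, no C ⊆ F with X_A = ∏_{p∈C} X_p), then the toric code equilibrium state satisfies ⟨X_A⟩ = 0. -/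
open scoped BigOperators

/-!
Since `X_A` is not a product of plaquette operators, the flip configuration of `A` lies outside
the subgroup of `Ω = (ℤˣ)^E` generated by the face flips `x^p`; as `Ω` is a `ZMod 2`-vector
space, some character `χ : Ω → ℤˣ` is trivial on every `x^p` but equals `-1` there. The diagonal
operator `D = diag χ` is an involution commuting with every `X_p` and every (diagonal) `Z_s`,
hence with `exp (-H)`, while `D X_A = -X_A D`. Conjugation by `D` therefore leaves
`tr (X_A exp (-H))` unchanged and also negates it, so it vanishes.
-/

section ElementaryAbelianTwoGroup

variable {G : Type*} [CommGroup G]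

/-- In the `ZMod 2`-vector space `Additive G` the products of subfamilies of `f` form the span
of `f`; `χ` is `(-1) ^ φ` for a functional `φ` that vanishes on this span but not at `g`. -/
theorem exists_monoidHom_eq_neg_one_of_forall_ne_prod {ι : Type*} [Fintype ι]
    (hG : ∀ g : G, g * g = 1) (f : ι → G) (g : G) (hg : ∀ C : Finset ι, g ≠ ∏ i ∈ C, f i) :
    ∃ χ : G →* ℤˣ, χ g = -1 ∧ ∀ i, χ (f i) = 1 := by
  classical
  let : Module (ZMod 2) (Additive G) :=
    AddCommGroup.zmodModule fun x => by rw [two_nsmul]; exact Additive.toMul.injective (hG x.toMul)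
  have hZMod2 : ∀ c : ZMod 2, c = 0 ∨ c = 1 := by decide
  have hnot : Additive.ofMul g ∉
      Submodule.span (ZMod 2) (Set.range fun i => Additive.ofMul (f i)) := by
    rw [Submodule.mem_span_range_iff_exists_fun]
    rintro ⟨c, hc⟩
    refine hg (Finset.univ.filter fun i => c i = 1) (Additive.ofMul.injective ?_)
    rw [← hc, ofMul_prod, Finset.sum_filter]
    refine Finset.sum_congr rfl fun i _ => ?_
    rcases hZMod2 (c i) with h | h <;> simp [h]
  obtain ⟨φ, hφg, hφf⟩ := Submodule.exists_le_ker_of_notMem hnot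
  refine ⟨{ toFun := fun x => (-1 : ℤˣ) ^ φ (Additive.ofMul x)
            map_one' := by simp
            map_mul' := fun x y => by simp [ofMul_mul, uzpow_add] }, ?_, fun i => ?_⟩
  · rcases hZMod2 (φ (Additive.ofMul g)) with h | h
    · exact absurd h hφg
    · simp [h]
  · simp [LinearMap.mem_ker.mp (hφf (Submodule.subset_span ⟨i, rfl⟩))]

end ElementaryAbelianTwoGroup

section CharacterMatrix

variable {G : Type*} [CommGroup G] [Fintype G] [DecidableEq G] {R : Type*} [CommRing R]

def shiftMatrix (c : G) : Matrix G G R := fun τ ω => if τ = c * ω then 1 else 0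

def charMatrix (χ : G →* ℤˣ) : Matrix G G R := Matrix.diagonal fun ω => ((χ ω : ℤ) : R)

theorem charMatrix_mul_self (χ : G →* ℤˣ) :
    (charMatrix χ : Matrix G G R) * charMatrix χ = 1 := by
  rw [charMatrix, Matrix.diagonal_mul_diagonal, ← Matrix.diagonal_one]
  congr 1
  funext ω
  rw [← Int.cast_mul, ← Units.val_mul, Int.units_mul_self, Units.val_one, Int.cast_one]

theorem charMatrix_mul_shiftMatrix (χ : G →* ℤˣ) (c : G) :
    (charMatrix χ : Matrix G G R) * shiftMatrix c =
      ((χ c : ℤ) : R) • (shiftMatrix c * charMatrix χ) := by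
  ext τ ω
  simp only [charMatrix, shiftMatrix, Matrix.diagonal_mul, Matrix.mul_diagonal, Matrix.smul_apply,
    smul_eq_mul]
  split_ifs with hτ
  · simp [hτ]
  · simp

theorem commute_charMatrix_shiftMatrix {χ : G →* ℤˣ} {c : G} (hc : χ c = 1) :
    Commute (charMatrix χ) (shiftMatrix c : Matrix G G R) := by
  simpa [Commute, SemiconjBy, hc] using charMatrix_mul_shiftMatrix (R := R) χ c

theorem charMatrix_mul_shiftMatrix_of_eq_neg_one {χ : G →* ℤˣ} {c : G} (hc : χ c = -1) :
    charMatrix χ * shiftMatrix c = -((shiftMatrix c : Matrix G G R) * charMatrix χ) := by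
  simpa [hc] using charMatrix_mul_shiftMatrix (R := R) χ c

theorem commute_charMatrix_diagonal (χ : G →* ℤˣ) (d : G → R) :
    Commute (charMatrix χ) (Matrix.diagonal d) :=
  Matrix.commute_diagonal _ _

end CharacterMatrix

theorem Matrix.trace_mul_eq_zero_of_involution {ι R : Type*} [Fintype ι] [DecidableEq ι]
    [CommRing R] [NoZeroDivisors R] [CharZero R] {D X E : Matrix ι ι R} (hD : D * D = 1)
    (hDX : D * X = -(X * D)) (hDE : Commute D E) : (X * E).trace = 0 := by
  have hconj : D * (X * E) * D = -(X * E) := by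
    calc D * (X * E) * D = D * X * (E * D) := by noncomm_ring
      _ = -(X * (D * E * D)) := by rw [hDX]; noncomm_ring
      _ = -(X * E) := by rw [hDE.eq, mul_assoc, hD, mul_one]
  have htrace : (D * (X * E) * D).trace = (X * E).trace := by
    rw [Matrix.trace_mul_comm, ← mul_assoc, hD, one_mul]
  rw [hconj, Matrix.trace_neg] at htrace
  exact CharZero.neg_eq_self_iff.mp htrace

namespace Toric

variable {m n : ℕ} [NeZero m] [NeZero n]

theorem XA_eq_shiftMatrix (A : Finset (Edge m n)) : XA m n A = shiftMatrix (aconf m n A) := rfl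

theorem X_eq_shiftMatrix (p : Vtx m n) : X m n p = shiftMatrix (xconf m n p) := rfl

theorem commute_charMatrix_H {χ : SConf m n →* ℤˣ} (hχ : ∀ p, χ (xconf m n p) = 1)
    (Jx Jz : Vtx m n → ℝ) : Commute (charMatrix χ) (H m n Jx Jz) := by
  refine ((Commute.sum_right _ _ _ fun p _ => ?_).neg_right).sub_right
    (Commute.sum_right _ _ _ fun s _ => ?_)
  · exact X_eq_shiftMatrix p ▸ (commute_charMatrix_shiftMatrix (hχ p)).smul_right (Jx p)
  · exact (commute_charMatrix_diagonal χ _).smul_right (Jz s)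

theorem aconf_ne_prod_xconf {A : Finset (Edge m n)}
    (h : ¬∃ C : Finset (Vtx m n), XA m n A = XProd m n C) (C : Finset (Vtx m n)) :
    aconf m n A ≠ ∏ p ∈ C, xconf m n p := fun hC => h ⟨C, by rw [XA_eq_shiftMatrix, hC]; rfl⟩

end Toric

theorem toric_code_XA_vanishes_general (m n : ℕ) [NeZero m] [NeZero n]
    (Jx Jz : Toric.Vtx m n → ℝ)
    (A : Finset (Toric.Edge m n))
    (h : ¬∃ C : Finset (Toric.Vtx m n), Toric.XA m n A = Toric.XProd m n C) :
    Toric.gibbs m n Jx Jz (Toric.XA m n A) = 0 := by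
  obtain ⟨χ, hχA, hχX⟩ := exists_monoidHom_eq_neg_one_of_forall_ne_prod
    (fun ω => funext fun e => Int.units_mul_self (ω e)) (Toric.xconf m n) (Toric.aconf m n A)
    (Toric.aconf_ne_prod_xconf h)
  have hcomm : Commute (charMatrix χ) (Toric.mexp m n (-Toric.H m n Jx Jz)) :=
    ((Toric.commute_charMatrix_H hχX Jx Jz).neg_right).exp_right
  rw [Toric.gibbs, Toric.XA_eq_shiftMatrix, Matrix.trace_mul_eq_zero_of_involution
    (charMatrix_mul_self χ) (charMatrix_mul_shiftMatrix_of_eq_neg_one hχA) hcomm, zero_div]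

/-- If `X_A = ∏_{e∈A} σ¹_e` is not a product of plaquette
operators (no `C ⊆ F` with `X_A = ∏_{p∈C} X_p`), then `⟨X_A⟩ = 0`. -/
theorem toric_code_XA_vanishes (m n : ℕ) [NeZero m] [NeZero n]
    (hm : 3 ≤ m) (hn : 3 ≤ n)
    (Jx Jz : Toric.Vtx m n → ℝ) (hJx : ∀ p, 0 ≤ Jx p) (hJz : ∀ s, 0 ≤ Jz s)
    (A : Finset (Toric.Edge m n))
    (h : ¬∃ C : Finset (Toric.Vtx m n), Toric.XA m n A = Toric.XProd m n C) :
    Toric.gibbs m n Jx Jz (Toric.XA m n A) = 0 :=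
  toric_code_XA_vanishes_general m n Jx Jz A h
end

section
/- Let m,n ≥ 3 and let Λ be the m×n torus lattice. Let G' be the subgroup of ({−1,+1}^E, componentwise multiplication) generated by the plaquette-flip elements {x^p : p ∈ F}, acting on Ω_8vx = {σ ∈ {−1,+1}^E : ∏_{e∼s} σ_e = +1 for all s ∈ V} by componentwise multiplication. Then this action has exactly four orbits, and each orbit has cardinality 2^{mn−1}. -/
open scoped BigOperators

/-!
Transport everything to `𝔽₂ = ZMod 2` via `±1 ↦ 0, 1`. Then `Ω_8vx` becomes the cycle space
`ker ∂₁` of the cellular chain complex `C₂ → C₁ → C₀` of the torus, and the plaquette group becomes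
the boundary space `im ∂₂`; the orbits are the classes of `H₁(T²; 𝔽₂) ≅ 𝔽₂²`. Concretely,
`ker ∂₁ᵀ` consists of the constant vertex functions because the torus graph is connected, so
`rank ∂₁ = mn - 1`; and up to relabelling the edges by their dual edges, `∂₂ = ∂₁ᵀ` (the square
lattice on the torus is self-dual), so `rank ∂₂ = mn - 1` as well. Hence `|Ω_8vx| = 2^(mn+1)`
while the plaquette group has `2^(mn-1)` elements.
-/

namespace Subgroup

variable {G : Type*} [Group G] {H K : Subgroup G}

lemma setOf_mem_and_exists_mul_eq (hHK : H ≤ K) {σ : G} (hσ : σ ∈ K) :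
    {τ | τ ∈ K ∧ ∃ g ∈ H, τ = g * σ} = (· * σ) '' H := by
  ext τ
  constructor
  · rintro ⟨-, g, hg, rfl⟩
    exact ⟨g, hg, rfl⟩
  · rintro ⟨g, hg, rfl⟩
    exact ⟨K.mul_mem (hHK hg) hσ, g, hg, rfl⟩

lemma ncard_setOf_mem_and_exists_mul_eq (hHK : H ≤ K) {σ : G} (hσ : σ ∈ K) :
    {τ | τ ∈ K ∧ ∃ g ∈ H, τ = g * σ}.ncard = Nat.card H := by
  rw [setOf_mem_and_exists_mul_eq hHK hσ, Set.ncard_image_of_injective _ (mul_left_injective σ),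
    ← Nat.card_coe_set_eq, SetLike.coe_sort_coe]

lemma image_val_orbit_subgroupOf (hHK : H ≤ K) (σ : K) :
    (↑) '' MulAction.orbit (H.subgroupOf K) σ = {τ | τ ∈ K ∧ ∃ g ∈ H, τ = g * σ} := by
  ext τ
  constructor
  · rintro ⟨_, ⟨⟨g, hg⟩, rfl⟩, rfl⟩
    exact ⟨(g * σ).2, g, hg, rfl⟩
  · rintro ⟨hτ, g, hg, rfl⟩
    exact ⟨⟨g * σ, hτ⟩, ⟨⟨⟨g, hHK hg⟩, hg⟩, rfl⟩, rfl⟩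

lemma ncard_setOf_rightCosets (hHK : H ≤ K) :
    {A : Set G | ∃ σ ∈ K, A = {τ | τ ∈ K ∧ ∃ g ∈ H, τ = g * σ}}.ncard = H.relIndex K := by
  have hrange : Set.range (fun x : MulAction.orbitRel.Quotient (H.subgroupOf K) K =>
      ((↑) '' x.orbit : Set G)) = {A | ∃ σ ∈ K, A = {τ | τ ∈ K ∧ ∃ g ∈ H, τ = g * σ}} := by
    ext A
    constructor
    · rintro ⟨x, rfl⟩
      induction x using Quotient.inductionOn' with | h σ => ?_
      exact ⟨σ, σ.2, image_val_orbit_subgroupOf hHK σ⟩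
    · rintro ⟨σ, hσ, rfl⟩
      exact ⟨Quotient.mk'' ⟨σ, hσ⟩, image_val_orbit_subgroupOf hHK _⟩
  rw [← hrange, Set.ncard_range_of_injective, relIndex, index]
  · exact Nat.card_congr (QuotientGroup.quotientRightRelEquivQuotientLeftRel _)
  · exact (Set.image_injective.2 Subtype.val_injective).comp
      MulAction.orbitRel.Quotient.orbit_injective

end Subgroup

lemma ZMod.apply_eq_apply_zero_of_periodic {m : ℕ} [NeZero m] {α : Type*} {f : ZMod m → α}
    (hf : Function.Periodic f 1) (a : ZMod m) : f a = f 0 := by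
  simpa using hf.nat_mul_eq a.val

def Int.unitsMulEquivZModTwo : ℤˣ ≃* Multiplicative (ZMod 2) where
  toFun u := .ofAdd (if u = 1 then 0 else 1)
  invFun x := if x.toAdd = 0 then 1 else -1
  left_inv := by decide
  right_inv := by decide
  map_mul' := by decide

namespace Toric

open Matrix

section toChain

variable {ι : Type*}

def toChain : (ι → ℤˣ) ≃ (ι → ZMod 2) :=
  .piCongrRight fun _ => Int.unitsMulEquivZModTwo.toEquiv.trans Multiplicative.toAdd

lemma toChain_apply (σ : ι → ℤˣ) (i : ι) :
    toChain σ i = (Int.unitsMulEquivZModTwo (σ i)).toAdd := rfl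

lemma toChain_one : toChain (1 : ι → ℤˣ) = 0 := by
  ext i
  simp [toChain_apply]

lemma toChain_mul (σ τ : ι → ℤˣ) : toChain (σ * τ) = toChain σ + toChain τ := by
  ext i
  simp [toChain_apply]

lemma toChain_inv (σ : ι → ℤˣ) : toChain σ⁻¹ = -toChain σ := by
  ext i
  simp [toChain_apply]

lemma prod_eq_one_iff_sum_toChain_eq_zero (σ : ι → ℤˣ) (s : Finset ι) :
    ∏ i ∈ s, σ i = 1 ↔ ∑ i ∈ s, toChain σ i = 0 := by
  simp [toChain_apply, ← toAdd_prod, ← map_prod]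

lemma image_toChain_closure (S : Set (ι → ℤˣ)) :
    toChain '' (Subgroup.closure S : Set (ι → ℤˣ)) = Submodule.span (ZMod 2) (toChain '' S) := by
  apply le_antisymm
  · rintro _ ⟨σ, hσ, rfl⟩
    induction hσ using Subgroup.closure_induction with
    | mem σ h => exact Submodule.subset_span ⟨σ, h, rfl⟩
    | one => rw [toChain_one]; exact zero_mem _
    | mul σ τ _ _ hσ hτ => rw [toChain_mul]; exact add_mem hσ hτ
    | inv σ _ hσ => rw [toChain_inv]; exact neg_mem hσ
  · intro x hx
    induction hx using Submodule.span_induction with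
    | mem x h => obtain ⟨σ, hσ, rfl⟩ := h; exact ⟨σ, Subgroup.subset_closure hσ, rfl⟩
    | zero => exact ⟨1, one_mem _, toChain_one⟩
    | add x y _ _ hx hy =>
      obtain ⟨σ, hσ, rfl⟩ := hx
      obtain ⟨τ, hτ, rfl⟩ := hy
      exact ⟨σ * τ, mul_mem hσ hτ, toChain_mul σ τ⟩
    | smul c x _ hx =>
      obtain rfl | rfl : c = 0 ∨ c = 1 := by revert c; decide
      · rw [zero_smul]
        exact ⟨1, one_mem _, toChain_one⟩
      · rwa [one_smul]

end toChain

variable {m n : ℕ}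

lemma mk_true_mem_starSet {u s : Vtx m n} :
    ((u, true) : Edge m n) ∈ starSet m n s ↔ s = u ∨ s = (u.1 + 1, u.2) := by
  simp [starSet, star, Fin.exists_fin_succ, Prod.ext_iff, sub_eq_iff_eq_add]

lemma mk_false_mem_starSet {u s : Vtx m n} :
    ((u, false) : Edge m n) ∈ starSet m n s ↔ s = u ∨ s = (u.1, u.2 + 1) := by
  simp [starSet, star, Fin.exists_fin_succ, Prod.ext_iff, sub_eq_iff_eq_add]

lemma mk_true_mem_faceSet {u p : Vtx m n} :
    ((u, true) : Edge m n) ∈ faceSet m n p ↔ p = u ∨ p = (u.1, u.2 - 1) := by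
  simp [faceSet, faceEdge, Fin.exists_fin_succ, Prod.ext_iff, eq_sub_iff_add_eq]

lemma mk_false_mem_faceSet {u p : Vtx m n} :
    ((u, false) : Edge m n) ∈ faceSet m n p ↔ p = u ∨ p = (u.1 - 1, u.2) := by
  simp [faceSet, faceEdge, Fin.exists_fin_succ, Prod.ext_iff, eq_sub_iff_add_eq]

lemma faceEdge_injective [Fact (1 < m)] [Fact (1 < n)] (p : Vtx m n) :
    Function.Injective (faceEdge m n p) := by
  intro i j
  fin_cases i <;> fin_cases j <;> simp [faceEdge, Prod.ext_iff]

/-- The boundary map `∂₁ : C₁ → C₀` of the torus over `𝔽₂`. -/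
def edgeBoundary (m n : ℕ) : Matrix (Vtx m n) (Edge m n) (ZMod 2) :=
  .of fun s e => if e ∈ starSet m n s then 1 else 0

/-- The boundary map `∂₂ : C₂ → C₁` of the torus over `𝔽₂`. -/
def faceBoundary (m n : ℕ) : Matrix (Edge m n) (Vtx m n) (ZMod 2) :=
  .of fun e p => if e ∈ faceSet m n p then 1 else 0

lemma edgeBoundary_col_mk_true [Fact (1 < m)] (u : Vtx m n) :
    (edgeBoundary m n).col (u, true) = Pi.single u 1 + Pi.single (u.1 + 1, u.2) 1 := by
  ext s
  have : u ≠ (u.1 + 1, u.2) := by simp [Prod.ext_iff]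
  by_cases h : s = u <;> simp_all [edgeBoundary, mk_true_mem_starSet, Pi.single_apply]

lemma edgeBoundary_col_mk_false [Fact (1 < n)] (u : Vtx m n) :
    (edgeBoundary m n).col (u, false) = Pi.single u 1 + Pi.single (u.1, u.2 + 1) 1 := by
  ext s
  have : u ≠ (u.1, u.2 + 1) := by simp [Prod.ext_iff]
  by_cases h : s = u <;> simp_all [edgeBoundary, mk_false_mem_starSet, Pi.single_apply]

/-- The edge of the dual lattice crossing `e`, as an edge of the original lattice: its endpoints
are the two faces bordering `e`, each face being identified with its lower-left corner. -/
def dualEdge : Edge m n ≃ Edge m n where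
  toFun e := if e.2 then ((e.1.1, e.1.2 - 1), false) else ((e.1.1 - 1, e.1.2), true)
  invFun e := if e.2 then ((e.1.1 + 1, e.1.2), false) else ((e.1.1, e.1.2 + 1), true)
  left_inv := by rintro ⟨u, _ | _⟩ <;> simp
  right_inv := by rintro ⟨u, _ | _⟩ <;> simp

lemma faceBoundary_eq_submatrix :
    faceBoundary m n = (edgeBoundary m n)ᵀ.submatrix dualEdge (Equiv.refl _) := by
  ext ⟨u, _ | _⟩ p <;>
    simp [faceBoundary, edgeBoundary, dualEdge, mk_true_mem_faceSet, mk_false_mem_faceSet,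
      mk_true_mem_starSet, mk_false_mem_starSet, or_comm]

lemma sum_edgeBoundary_col_faceEdge [Fact (1 < m)] [Fact (1 < n)] (p : Vtx m n) :
    ∑ i, (edgeBoundary m n).col (faceEdge m n p i) = 0 := by
  ext s
  simp only [Fin.sum_univ_four, faceEdge, cons_val_zero, cons_val_one, cons_val_two,
    cons_val_three, head_cons, tail_cons, edgeBoundary_col_mk_true, edgeBoundary_col_mk_false,
    Pi.add_apply, Pi.zero_apply]
  -- each corner of the face is an endpoint of exactly two of its edges
  ring_nf
  reduce_mod_char

section finite

variable [NeZero m] [NeZero n]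

lemma edgeBoundary_mul_faceBoundary [Fact (1 < m)] [Fact (1 < n)] :
    edgeBoundary m n * faceBoundary m n = 0 := by
  ext s p
  calc (edgeBoundary m n * faceBoundary m n) s p
      = ∑ e ∈ faceSet m n p, (edgeBoundary m n).col e s := by
        simp [mul_apply, faceBoundary, mul_ite, Finset.sum_ite_mem]
    _ = (∑ i, (edgeBoundary m n).col (faceEdge m n p i)) s := by
        rw [faceSet, Finset.sum_image fun i _ j _ h => faceEdge_injective p h, Finset.sum_apply]
    _ = 0 := by rw [sum_edgeBoundary_col_faceEdge]; rfl

lemma edgeBoundary_mulVec_apply (x : Edge m n → ZMod 2) (s : Vtx m n) :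
    (edgeBoundary m n *ᵥ x) s = ∑ e ∈ starSet m n s, x e := by
  simp [mulVec, dotProduct, edgeBoundary, ite_mul, Finset.sum_ite_mem]

lemma transpose_edgeBoundary_mulVec_mk_true [Fact (1 < m)] (y : Vtx m n → ZMod 2)
    (u : Vtx m n) : ((edgeBoundary m n)ᵀ *ᵥ y) (u, true) = y u + y (u.1 + 1, u.2) := by
  change (edgeBoundary m n).col (u, true) ⬝ᵥ y = _
  simp [edgeBoundary_col_mk_true, add_dotProduct]

lemma transpose_edgeBoundary_mulVec_mk_false [Fact (1 < n)] (y : Vtx m n → ZMod 2)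
    (u : Vtx m n) : ((edgeBoundary m n)ᵀ *ᵥ y) (u, false) = y u + y (u.1, u.2 + 1) := by
  change (edgeBoundary m n).col (u, false) ⬝ᵥ y = _
  simp [edgeBoundary_col_mk_false, add_dotProduct]

lemma apply_eq_apply_zero_of_periodic {α : Type*} {y : Vtx m n → α}
    (h₁ : ∀ u : Vtx m n, y (u.1 + 1, u.2) = y u) (h₂ : ∀ u : Vtx m n, y (u.1, u.2 + 1) = y u)
    (u : Vtx m n) : y u = y 0 :=
  calc y u = y (u.1, 0) :=
        ZMod.apply_eq_apply_zero_of_periodic (f := fun b => y (u.1, b)) (fun b => h₂ (u.1, b)) u.2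
    _ = y 0 :=
        ZMod.apply_eq_apply_zero_of_periodic (f := fun a => y (a, 0)) (fun a => h₁ (a, 0)) u.1

variable [Fact (1 < m)] [Fact (1 < n)]

lemma ker_mulVecLin_transpose_edgeBoundary :
    LinearMap.ker (edgeBoundary m n)ᵀ.mulVecLin = Submodule.span (ZMod 2) {1} := by
  apply le_antisymm
  · intro y hy
    have hy' : ∀ e, ((edgeBoundary m n)ᵀ *ᵥ y) e = 0 := fun e => congrFun hy e
    have hconst := apply_eq_apply_zero_of_periodic (y := y)
      (fun u => (CharTwo.add_eq_zero.1 (by rw [← transpose_edgeBoundary_mulVec_mk_true, hy'])).symm)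
      (fun u => (CharTwo.add_eq_zero.1 (by rw [← transpose_edgeBoundary_mulVec_mk_false, hy'])).symm)
    exact Submodule.mem_span_singleton.2 ⟨y 0, funext fun u => by simp [hconst u]⟩
  · rw [Submodule.span_le, Set.singleton_subset_iff, SetLike.mem_coe, LinearMap.mem_ker,
      mulVecLin_apply]
    ext ⟨u, _ | _⟩
    · rw [transpose_edgeBoundary_mulVec_mk_false]
      exact CharTwo.add_self_eq_zero 1
    · rw [transpose_edgeBoundary_mulVec_mk_true]
      exact CharTwo.add_self_eq_zero 1

lemma rank_transpose_edgeBoundary : (edgeBoundary m n)ᵀ.rank = m * n - 1 := by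
  have h := LinearMap.finrank_range_add_finrank_ker (edgeBoundary m n)ᵀ.mulVecLin
  rw [ker_mulVecLin_transpose_edgeBoundary, finrank_span_singleton one_ne_zero,
    Module.finrank_fintype_fun_eq_card, Fintype.card_prod, ZMod.card, ZMod.card] at h
  rw [rank]
  omega

lemma rank_faceBoundary : (faceBoundary m n).rank = m * n - 1 := by
  rw [faceBoundary_eq_submatrix, rank_submatrix, rank_transpose_edgeBoundary]

lemma card_ker_mulVecLin_edgeBoundary :
    Nat.card (LinearMap.ker (edgeBoundary m n).mulVecLin) = 2 ^ (m * n + 1) := by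
  have h := LinearMap.finrank_range_add_finrank_ker (edgeBoundary m n).mulVecLin
  rw [← rank, ← rank_transpose, rank_transpose_edgeBoundary, Module.finrank_fintype_fun_eq_card,
    Fintype.card_prod, Fintype.card_prod, ZMod.card, ZMod.card, Fintype.card_bool] at h
  have hmn : 1 ≤ m * n := Nat.one_le_iff_ne_zero.2 (mul_ne_zero (NeZero.ne m) (NeZero.ne n))
  rw [Module.natCard_eq_pow_finrank (K := ZMod 2), Nat.card_zmod]
  congr 1
  omega

lemma card_range_mulVecLin_faceBoundary :
    Nat.card (LinearMap.range (faceBoundary m n).mulVecLin) = 2 ^ (m * n - 1) := by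
  rw [Module.natCard_eq_pow_finrank (K := ZMod 2), Nat.card_zmod, ← rank, rank_faceBoundary]

end finite

lemma toChain_xconf (p : Vtx m n) : toChain (xconf m n p) = (faceBoundary m n).col p := by
  ext e
  by_cases h : e ∈ faceSet m n p <;> simp [toChain_apply, xconf, faceBoundary, h]
  rfl

variable (m n) [NeZero m] [NeZero n]

def eightVertexSubgroup : Subgroup (SConf m n) where
  carrier := {σ | ∀ s : Vtx m n, ∏ e ∈ starSet m n s, σ e = 1}
  mul_mem' hσ hτ s := by simp only [Pi.mul_apply, Finset.prod_mul_distrib, hσ s, hτ s, mul_one]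
  one_mem' _ := Finset.prod_const_one
  inv_mem' hσ s := by simp only [Pi.inv_apply, Finset.prod_inv_distrib, hσ s, inv_one]

lemma image_toChain_eightVertexSubgroup :
    toChain '' (eightVertexSubgroup m n : Set (SConf m n)) =
      LinearMap.ker (edgeBoundary m n).mulVecLin := by
  ext x
  rw [toChain.image_eq_preimage_symm]
  simp only [Set.mem_preimage, SetLike.mem_coe, LinearMap.mem_ker, mulVecLin_apply, funext_iff,
    edgeBoundary_mulVec_apply, Pi.zero_apply]
  change (∀ s, ∏ e ∈ starSet m n s, toChain.symm x e = 1) ↔ _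
  simp only [prod_eq_one_iff_sum_toChain_eq_zero, Equiv.apply_symm_apply]

lemma image_toChain_closure_range_xconf :
    toChain '' (Subgroup.closure (Set.range (xconf m n)) : Set (SConf m n)) =
      LinearMap.range (faceBoundary m n).mulVecLin := by
  rw [image_toChain_closure, ← Set.range_comp, range_mulVecLin,
    show toChain ∘ xconf m n = (faceBoundary m n).col from funext toChain_xconf]

variable [Fact (1 < m)] [Fact (1 < n)]

lemma closure_range_xconf_le_eightVertexSubgroup :
    Subgroup.closure (Set.range (xconf m n)) ≤ eightVertexSubgroup m n := by
  rw [Subgroup.closure_le]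
  rintro _ ⟨p, rfl⟩ s
  rw [prod_eq_one_iff_sum_toChain_eq_zero, ← edgeBoundary_mulVec_apply, toChain_xconf]
  exact congrFun (congrFun (edgeBoundary_mul_faceBoundary (m := m) (n := n)) s) p

lemma card_eightVertexSubgroup : Nat.card (eightVertexSubgroup m n) = 2 ^ (m * n + 1) := by
  rw [← SetLike.coe_sort_coe, Nat.card_coe_set_eq,
    ← Set.ncard_image_of_injective _ toChain.injective, image_toChain_eightVertexSubgroup,
    ← Nat.card_coe_set_eq]
  exact card_ker_mulVecLin_edgeBoundary

lemma card_closure_range_xconf :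
    Nat.card (Subgroup.closure (Set.range (xconf m n))) = 2 ^ (m * n - 1) := by
  rw [← SetLike.coe_sort_coe, Nat.card_coe_set_eq,
    ← Set.ncard_image_of_injective _ toChain.injective, image_toChain_closure_range_xconf,
    ← Nat.card_coe_set_eq]
  exact card_range_mulVecLin_faceBoundary

end Toric

/-- The subgroup of `({±1}^E, ·)` generated by the plaquette flips
`{x^p : p ∈ F}` acts on `Ω_8vx` by componentwise multiplication with exactly four
orbits, each of cardinality `2^{mn-1}`. -/
theorem plaquette_flip_orbits (m n : ℕ) [NeZero m] [NeZero n]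
    (hm : 3 ≤ m) (hn : 3 ≤ n) :
    let Ω8 : Set (Toric.SConf m n) :=
      {σ | ∀ s : Toric.Vtx m n, (∏ e ∈ Toric.starSet m n s, σ e) = 1}
    let G' : Subgroup (Toric.SConf m n) := Subgroup.closure (Set.range (Toric.xconf m n))
    let orbit : Toric.SConf m n → Set (Toric.SConf m n) :=
      fun σ => {τ | τ ∈ Ω8 ∧ ∃ g ∈ G', τ = g * σ}
    {A : Set (Toric.SConf m n) | ∃ σ ∈ Ω8, A = orbit σ}.ncard = 4 ∧
      ∀ σ ∈ Ω8, (orbit σ).ncard = 2 ^ (m * n - 1) := by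
  intro Ω8 G' orbit
  have : Fact (1 < m) := ⟨by omega⟩
  have : Fact (1 < n) := ⟨by omega⟩
  have hle : G' ≤ Toric.eightVertexSubgroup m n :=
    Toric.closure_range_xconf_le_eightVertexSubgroup m n
  have hindex : G'.relIndex (Toric.eightVertexSubgroup m n) = 4 := by
    have h := Subgroup.relIndex_mul_relIndex ⊥ G' _ bot_le hle
    rw [Subgroup.relIndex_bot_left, Subgroup.relIndex_bot_left,
      Toric.card_closure_range_xconf, Toric.card_eightVertexSubgroup] at h
    obtain ⟨k, hk⟩ : ∃ k, m * n = k + 1 := ⟨m * n - 1, by have := Nat.mul_le_mul hm hn; omega⟩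
    rw [hk, Nat.add_sub_cancel, pow_succ, pow_succ, mul_assoc] at h
    exact Nat.eq_of_mul_eq_mul_left (by positivity) h
  exact ⟨(Subgroup.ncard_setOf_rightCosets hle).trans hindex, fun σ hσ =>
    (Subgroup.ncard_setOf_mem_and_exists_mul_eq hle hσ).trans (Toric.card_closure_range_xconf m n)⟩
end
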